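/- In the Coxeter group of type Dₙ, the map sending a canonical reduced word w₀·w' to its suffix w' gives a well-defined partition of the set of fully commutative elements into 2^(n-1) (possibly empty) collections indexed by subsets of {1,…,n-1}, and every such collection is nonempty since every suffix is itself fully commutative. -/

import Mathlib

/-- Letters `i` and `j` (from `{1, …, n}`) are neighbors in the `Dₙ` Dynkin diagram:
`1 – 2 – ⋯ – (n-2)` is a path, and both `n-1` and `n` are adjacent to `n-2`. -/
def dnAdj (n i j : ℕ) : Prop :=
  (i + 1 = j ∧ j ≤ n - 1) ∨ (j + 1 = i ∧ i ≤ n - 1) ∨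
  (i = n ∧ j = n - 2) ∨ (j = n ∧ i = n - 2)

/-- A word `w` is homogeneous (with respect to a neighbor relation `adj`): whenever the same
letter appears in positions `r < s`, there are positions `t, u` with `r < t < u < s` whose
letters are both neighbors of that letter. -/
def Homog {α : Type*} (adj : α → α → Prop) (w : List α) : Prop :=
  ∀ r s : Fin w.length, (r : ℕ) < s → w.get r = w.get s →
    ∃ t u : Fin w.length, (r : ℕ) < t ∧ (t : ℕ) < u ∧ (u : ℕ) < s ∧
      adj (w.get r) (w.get t) ∧ adj (w.get r) (w.get u)

/-- The descending word `[a, a-1, …, b]` (empty if `a < b`). -/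
def desc (a b : ℕ) : List ℕ := (List.range (a + 1 - b)).map (fun t => a - t)

/-- The suffix word `s_{n,j₁} s_{n-1,j₂} s_{n,j₃} ⋯` of type `Dₙ` determined by the indices
`j₁ < j₂ < ⋯ < j_ℓ`; the boolean records whether the next segment starts with `n` (`true`)
or with `n-1` (`false`). -/
def suffixWord (n : ℕ) : Bool → List ℕ → List ℕ
  | _, [] => []
  | b, j :: js => ((if b then n else n - 1) :: desc (n - 2) j) ++ suffixWord n (!b) js

/-- Validity of the indices `j₁ < j₂ < ⋯ < j_ℓ` of a suffix: strictly increasing and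
contained in `{1, …, n-1}`. -/
def ValidSuffixIdx (n : ℕ) (js : List ℕ) : Prop :=
  js.Chain' (· < ·) ∧ ∀ j ∈ js, 1 ≤ j ∧ j ≤ n - 1

/-- The prefix word `s_{1,i₁} s_{2,i₂} ⋯ s_{n-1,i_{n-1}}` where `s_{k,i} = [k, k-1, …, i]`. -/
def prefixWord (n : ℕ) (i : ℕ → ℕ) : List ℕ :=
  (List.range (n - 1)).flatMap (fun k => desc (k + 1) (i (k + 1)))

/-- Validity of the indices of a prefix: `1 ≤ i_k ≤ k + 1` for `1 ≤ k ≤ n-1`. -/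
def ValidPrefixIdx (n : ℕ) (i : ℕ → ℕ) : Prop :=
  ∀ k, 1 ≤ k → k ≤ n - 1 → 1 ≤ i k ∧ i k ≤ k + 1

/-- The collection labeled by a suffix `suf`: all homogeneous canonical words of type `Dₙ`
with suffix `suf`. -/
def collection (n : ℕ) (suf : List ℕ) : Set (List ℕ) :=
  {w | ∃ i, ValidPrefixIdx n i ∧ w = prefixWord n i ++ suf ∧ Homog (dnAdj n) w}

/-- The set of homogeneous canonical words of type `Dₙ`, representing the fully
commutative elements of the Coxeter group of type `Dₙ`. -/
def HomCanonical (n : ℕ) : Set (List ℕ) :=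
  {w | ∃ i js, ValidPrefixIdx n i ∧ ValidSuffixIdx n js ∧
       w = prefixWord n i ++ suffixWord n true js ∧ Homog (dnAdj n) w}

/-!
A prefix word only uses letters `< n`, while a nonempty suffix word starts with `n`; hence the
suffix of a canonical word is the part from its first letter `n` on. A suffix word in turn
determines its indices: after its head `n` or `n - 1`, each segment `n - 2, …, j` consists of
letters `< n - 1`, so the segments can be read off one by one. Strictly increasing index lists
are the subsets of `{1, …, n-1}`.

A suffix word is homogeneous because `j₁ < j₂ < ⋯`: the segments have distinct letters, and if a
letter `x` occurs in an earlier and a later segment, then either `x` is a segment head and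
`n - 2` occurs in that segment and in the next one, or `x ≤ n - 2` is followed by `x - 1` in the first segment
and preceded by a neighbour (`x + 1` or a head) in the later one.
-/

section Homog

variable {α : Type*}

def NeighborsBetween (adj : α → α → Prop) (w : List α) (x : α) (r s : ℕ) : Prop :=
  ∃ t u y z, r < t ∧ t < u ∧ u < s ∧ w[t]? = some y ∧ w[u]? = some z ∧ adj x y ∧ adj x z

variable {adj : α → α → Prop}

theorem homog_iff_neighborsBetween {w : List α} :
    Homog adj w ↔ ∀ r s x, r < s → w[r]? = some x → w[s]? = some x →
      NeighborsBetween adj w x r s := by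
  constructor
  · intro h r s x hrs hr hs
    obtain ⟨hr', rfl⟩ := List.getElem?_eq_some_iff.1 hr
    obtain ⟨hs', hsx⟩ := List.getElem?_eq_some_iff.1 hs
    obtain ⟨t, u, hrt, htu, hus, hy, hz⟩ := h ⟨r, hr'⟩ ⟨s, hs'⟩ hrs hsx.symm
    exact ⟨t, u, _, _, hrt, htu, hus, by simp, by simp, hy, hz⟩
  · intro h r s hrs hrs'
    obtain ⟨t, u, y, z, hrt, htu, hus, hy, hz, hxy, hxz⟩ :=
      h r s (w.get r) hrs (by simp) (by simpa using hrs'.symm)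
    obtain ⟨ht, rfl⟩ := List.getElem?_eq_some_iff.1 hy
    obtain ⟨hu, rfl⟩ := List.getElem?_eq_some_iff.1 hz
    exact ⟨⟨t, ht⟩, ⟨u, hu⟩, hrt, htu, hus, hxy, hxz⟩

theorem NeighborsBetween.append_right {S W : List α} {x : α} {r s : ℕ}
    (h : NeighborsBetween adj S x r s) : NeighborsBetween adj (S ++ W) x r s := by
  obtain ⟨t, u, y, z, hrt, htu, hus, hy, hz, hxy, hxz⟩ := h
  have hu : u < S.length := (List.getElem?_eq_some_iff.1 hz).1
  exact ⟨t, u, y, z, hrt, htu, hus, by rwa [List.getElem?_append_left (by omega)],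
    by rwa [List.getElem?_append_left hu], hxy, hxz⟩

theorem NeighborsBetween.append_left {S W : List α} {x : α} {r s : ℕ}
    (h : NeighborsBetween adj W x r s) :
    NeighborsBetween adj (S ++ W) x (S.length + r) (S.length + s) := by
  obtain ⟨t, u, y, z, hrt, htu, hus, hy, hz, hxy, hxz⟩ := h
  exact ⟨S.length + t, S.length + u, y, z, by omega, by omega, by omega,
    by simpa [List.getElem?_append_right], by simpa [List.getElem?_append_right], hxy, hxz⟩

theorem homog_of_nodup {w : List α} (hw : w.Nodup) : Homog adj w := by
  intro r s hrs hrs'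
  exact absurd ((List.Nodup.get_inj_iff hw).1 hrs') (Fin.ne_of_lt hrs)

theorem Homog.append {S W : List α} (hS : Homog adj S) (hW : Homog adj W)
    (hcross : ∀ r s x, S[r]? = some x → W[s]? = some x →
      NeighborsBetween adj (S ++ W) x r (S.length + s)) :
    Homog adj (S ++ W) := by
  rw [homog_iff_neighborsBetween] at hS hW ⊢
  intro r s x hrs hr hs
  rcases lt_or_ge s S.length with hsS | hSs
  · rw [List.getElem?_append_left (by omega)] at hr
    rw [List.getElem?_append_left hsS] at hs
    exact (hS r s x hrs hr hs).append_right
  rw [List.getElem?_append_right hSs] at hs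
  rcases lt_or_ge r S.length with hrS | hSr
  · rw [List.getElem?_append_left hrS] at hr
    simpa [Nat.add_sub_cancel' hSs] using hcross r (s - S.length) x hr hs
  · rw [List.getElem?_append_right hSr] at hr
    simpa [Nat.add_sub_cancel' hSs, Nat.add_sub_cancel' hSr] using
      (hW (r - S.length) (s - S.length) x (by omega) hr hs).append_left (S := S)

end Homog

theorem List.append_inj_of_forall_of_head? {α : Type*} (p : α → Bool) {l₁ l₂ r₁ r₂ : List α}
    (hl₁ : ∀ a ∈ l₁, p a) (hl₂ : ∀ a ∈ l₂, p a) (hr₁ : ∀ a ∈ r₁.head?, ¬p a)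
    (hr₂ : ∀ a ∈ r₂.head?, ¬p a) (h : l₁ ++ r₁ = l₂ ++ r₂) : l₁ = l₂ ∧ r₁ = r₂ := by
  have takeWhile_eq {l r : List α} (hl : ∀ a ∈ l, p a) (hr : ∀ a ∈ r.head?, ¬p a) :
      (l ++ r).takeWhile p = l := by
    rw [List.takeWhile_append_of_pos hl]
    cases r <;> simp_all
  have hl : l₁ = l₂ := by rw [← takeWhile_eq hl₁ hr₁, ← takeWhile_eq hl₂ hr₂, h]
  subst hl
  exact ⟨rfl, List.append_cancel_left h⟩

theorem length_desc (a b : ℕ) : (desc a b).length = a + 1 - b := by simp [desc]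

theorem getElem?_desc (a b k : ℕ) :
    (desc a b)[k]? = if k < a + 1 - b then some (a - k) else none := by
  split_ifs with h <;> simp [desc, h]

theorem mem_desc {a b x : ℕ} : x ∈ desc a b ↔ b ≤ x ∧ x ≤ a := by
  simp only [desc, List.mem_map, List.mem_range]
  constructor
  · rintro ⟨t, ht, rfl⟩; omega
  · intro h; exact ⟨a - x, by omega, by omega⟩

theorem nodup_desc (a b : ℕ) : (desc a b).Nodup :=
  List.nodup_range.map_on fun _ hx _ hy h => by simp only [List.mem_range] at hx hy; omega

section CanonicalWords

variable {n : ℕ}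

def suffixSegment (n : ℕ) (b : Bool) (j : ℕ) : List ℕ :=
  (if b then n else n - 1) :: desc (n - 2) j

theorem suffixWord_cons (b : Bool) (j : ℕ) (js : List ℕ) :
    suffixWord n b (j :: js) = suffixSegment n b j ++ suffixWord n (!b) js := rfl

theorem length_suffixSegment (b : Bool) (j : ℕ) :
    (suffixSegment n b j).length = n - 2 + 1 - j + 1 := by
  simp [suffixSegment, length_desc]

theorem getElem?_suffixSegment_zero (b : Bool) (j : ℕ) :
    (suffixSegment n b j)[0]? = some (if b then n else n - 1) := rfl

theorem getElem?_suffixSegment_succ (b : Bool) (j k : ℕ) :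
    (suffixSegment n b j)[k + 1]? = if k < n - 2 + 1 - j then some (n - 2 - k) else none := by
  simp [suffixSegment, getElem?_desc]

theorem nodup_suffixSegment (hn : 2 ≤ n) (b : Bool) (j : ℕ) : (suffixSegment n b j).Nodup := by
  refine List.nodup_cons.2 ⟨fun h => ?_, nodup_desc _ _⟩
  have := (mem_desc.1 h).2
  split at this <;> omega

theorem eq_of_mem_head?_suffixWord {b : Bool} {js : List ℕ} {a : ℕ}
    (ha : a ∈ (suffixWord n b js).head?) : a = if b then n else n - 1 := by
  cases js <;> simp_all [suffixWord]

theorem exists_le_of_mem_suffixWord {b : Bool} {js : List ℕ} {x : ℕ}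
    (hjs : ∀ j ∈ js, j ≤ n - 1) (hx : x ∈ suffixWord n b js) : ∃ j ∈ js, j ≤ x := by
  induction js generalizing b with
  | nil => simp [suffixWord] at hx
  | cons j js ih =>
    rw [suffixWord_cons, suffixSegment, List.cons_append, List.mem_cons, List.mem_append,
      mem_desc] at hx
    rcases hx with rfl | hx | hx
    · exact ⟨j, by simp, by have := hjs j (by simp); split <;> omega⟩
    · exact ⟨j, by simp, hx.1⟩
    · obtain ⟨j', hj', hj'x⟩ := ih (fun j hj => hjs j (by simp [hj])) hx
      exact ⟨j', by simp [hj'], hj'x⟩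

theorem exists_pred_adj_of_getElem?_suffixWord (hn : 2 ≤ n) {b : Bool} {js : List ℕ} {s x : ℕ}
    (hs : (suffixWord n b js)[s]? = some x) (hx : x ≤ n - 2) :
    0 < s ∧ ∃ y, (suffixWord n b js)[s - 1]? = some y ∧ dnAdj n x y := by
  induction js generalizing b s with
  | nil => simp [suffixWord] at hs
  | cons j js ih =>
    rw [suffixWord_cons, List.getElem?_append] at hs ⊢
    split_ifs at hs with hsS
    · obtain _ | _ | k := s
      · simp only [getElem?_suffixSegment_zero, Option.some.injEq] at hs
        split at hs <;> omega
      · rw [getElem?_suffixSegment_succ] at hs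
        split_ifs at hs
        cases hs
        refine ⟨by omega, _, by rw [if_pos (by omega)]; rfl, ?_⟩
        unfold dnAdj; split <;> omega
      · rw [getElem?_suffixSegment_succ] at hs
        split_ifs at hs with hk
        cases hs
        refine ⟨by omega, n - 2 - k, ?_, by unfold dnAdj; omega⟩
        rw [if_pos (by omega), Nat.add_sub_cancel, getElem?_suffixSegment_succ, if_pos (by omega)]
    · obtain ⟨hpos, y, hy, hxy⟩ := ih hs
      refine ⟨by omega, y, ?_, hxy⟩
      rwa [if_neg (by omega), show s - 1 - (suffixSegment n b j).length =
        s - (suffixSegment n b j).length - 1 by omega]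

theorem one_lt_and_getElem?_one_of_getElem?_suffixWord (hn : 2 ≤ n) {b : Bool} {js : List ℕ}
    {s x : ℕ} (hjs : ∀ j ∈ js, j ≤ n - 1) (hsorted : js.Pairwise (· < ·))
    (hs0 : 0 < s) (hs : (suffixWord n b js)[s]? = some x) (hx : n - 1 ≤ x) :
    1 < s ∧ (suffixWord n b js)[1]? = some (n - 2) := by
  obtain _ | ⟨j, js⟩ := js
  · simp [suffixWord] at hs
  rw [suffixWord_cons, List.getElem?_append] at hs ⊢
  split_ifs at hs with hsS
  · obtain _ | k := s
    · omega
    · rw [getElem?_suffixSegment_succ] at hs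
      split_ifs at hs
      cases hs
      omega
  · obtain ⟨j', hj', hjj'⟩ : ∃ j' ∈ js, j < j' := by
      obtain _ | ⟨j', js'⟩ := js
      · simp [suffixWord] at hs
      · exact ⟨j', by simp, List.rel_of_pairwise_cons hsorted (by simp)⟩
    have hj' := hjs j' (by simp [hj'])
    rw [length_suffixSegment] at hsS
    refine ⟨by omega, ?_⟩
    rw [if_pos (by rw [length_suffixSegment]; omega), getElem?_suffixSegment_succ,
      if_pos (by omega), Nat.sub_zero]

theorem neighborsBetween_suffixSegment_append (hn : 2 ≤ n) {b : Bool} {j : ℕ} {js : List ℕ}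
    {r s x : ℕ} (hjs : ∀ j' ∈ js, j' ≤ n - 1) (hjjs : ∀ j' ∈ js, j < j')
    (hsorted : js.Pairwise (· < ·)) (hr : (suffixSegment n b j)[r]? = some x)
    (hs : (suffixWord n (!b) js)[s]? = some x) :
    NeighborsBetween (dnAdj n) (suffixSegment n b j ++ suffixWord n (!b) js) x r
      ((suffixSegment n b j).length + s) := by
  have hlen := length_suffixSegment (n := n) b j
  obtain ⟨j', hj', hj'x⟩ := exists_le_of_mem_suffixWord hjs (List.mem_of_getElem? hs)
  have hjj' := hjjs j' hj'
  have hj'n := hjs j' hj'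
  obtain _ | k := r
  · rw [getElem?_suffixSegment_zero, Option.some.injEq] at hr
    subst hr
    have hs0 : s ≠ 0 := by
      rintro rfl
      rw [← List.head?_eq_getElem?] at hs
      have := eq_of_mem_head?_suffixWord hs
      cases b <;> simp at this <;> omega
    obtain ⟨hs1, hW1⟩ := one_lt_and_getElem?_one_of_getElem?_suffixWord hn hjs hsorted
      (Nat.pos_of_ne_zero hs0) hs (by split <;> omega)
    refine ⟨1, (suffixSegment n b j).length + 1, n - 2, n - 2, by omega, by omega, by omega,
      ?_, ?_, ?_, ?_⟩
    · rw [List.getElem?_append_left (by omega), getElem?_suffixSegment_succ, if_pos (by omega),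
        Nat.sub_zero]
    · rwa [List.getElem?_append_right (by omega), Nat.add_sub_cancel_left]
    all_goals unfold dnAdj; split <;> omega
  · rw [getElem?_suffixSegment_succ] at hr
    split_ifs at hr with hk
    cases hr
    obtain ⟨hs0, y, hy, hxy⟩ := exists_pred_adj_of_getElem?_suffixWord hn hs (by omega)
    refine ⟨k + 2, (suffixSegment n b j).length + (s - 1), n - 2 - (k + 1), y, by omega, by omega,
      by omega, ?_, ?_, ?_, hxy⟩
    · rw [List.getElem?_append_left (by omega), getElem?_suffixSegment_succ, if_pos (by omega)]
    · rwa [List.getElem?_append_right (by omega), Nat.add_sub_cancel_left]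
    · unfold dnAdj; omega

theorem homog_suffixWord (hn : 2 ≤ n) (b : Bool) {js : List ℕ} (hjs : ∀ j ∈ js, j ≤ n - 1)
    (hsorted : js.Pairwise (· < ·)) : Homog (dnAdj n) (suffixWord n b js) := by
  induction js generalizing b with
  | nil => exact fun r => r.elim0
  | cons j js ih =>
    have hjs' : ∀ j' ∈ js, j' ≤ n - 1 := fun j' hj' => hjs j' (by simp [hj'])
    rw [suffixWord_cons]
    exact (homog_of_nodup (nodup_suffixSegment hn b j)).append
      (ih (!b) hjs' hsorted.of_cons) fun r s x hr hs =>
        neighborsBetween_suffixSegment_append hn hjs' (fun _ => List.rel_of_pairwise_cons hsorted)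
          hsorted.of_cons hr hs

theorem suffixWord_injOn (hn : 2 ≤ n) (b : Bool) :
    Set.InjOn (suffixWord n b) {js | ∀ j ∈ js, j ≤ n - 1} := by
  intro js hjs js' hjs' h
  induction js generalizing b js' with
  | nil => cases js' <;> simp_all [suffixWord]
  | cons j js ih =>
    obtain _ | ⟨j', js'⟩ := js'
    · simp [suffixWord] at h
    simp only [suffixWord_cons, suffixSegment, List.cons_append, List.cons.injEq, true_and] at h
    have desc_lt {j a : ℕ} (ha : a ∈ desc (n - 2) j) : decide (a < n - 1) := by
      have := (mem_desc.1 ha).2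
      simp only [decide_eq_true_eq]
      omega
    have head_ge {js : List ℕ} {b : Bool} {a : ℕ} (ha : a ∈ (suffixWord n b js).head?) :
        ¬decide (a < n - 1) := by
      have := eq_of_mem_head?_suffixWord ha
      simp only [decide_eq_true_eq]
      split at this <;> omega
    obtain ⟨hdesc, htail⟩ := List.append_inj_of_forall_of_head? (· < n - 1)
      (fun _ => desc_lt) (fun _ => desc_lt) (fun _ => head_ge) (fun _ => head_ge) h
    have hj := hjs j (by simp)
    have hj' := hjs' j' (by simp)
    have := congrArg List.length hdesc
    simp only [length_desc] at this
    obtain rfl : j = j' := by omega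
    rw [ih (!b) (fun j hj => hjs j (by simp [hj])) (fun j hj => hjs' j (by simp [hj])) htail]

theorem lt_of_mem_prefixWord {x : ℕ} {i : ℕ → ℕ} (hx : x ∈ prefixWord n i) : x < n := by
  simp only [prefixWord, List.mem_flatMap, List.mem_range] at hx
  obtain ⟨k, hk, hx⟩ := hx
  have := (mem_desc.1 hx).2
  omega

theorem suffixIdx_eq_of_prefixWord_append_eq (hn : 2 ≤ n) {i i' : ℕ → ℕ} {js js' : List ℕ}
    (hjs : ∀ j ∈ js, j ≤ n - 1) (hjs' : ∀ j ∈ js', j ≤ n - 1)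
    (h : prefixWord n i ++ suffixWord n true js = prefixWord n i' ++ suffixWord n true js') :
    js = js' := by
  have head_eq {js : List ℕ} {a : ℕ} (ha : a ∈ (suffixWord n true js).head?) :
      ¬decide (a < n) := by
    simp [eq_of_mem_head?_suffixWord ha]
  have prefix_lt {i : ℕ → ℕ} {a : ℕ} (ha : a ∈ prefixWord n i) : decide (a < n) :=
    decide_eq_true (lt_of_mem_prefixWord ha)
  exact suffixWord_injOn hn true hjs hjs' (List.append_inj_of_forall_of_head? (· < n)
    (fun _ => prefix_lt) (fun _ => prefix_lt) (fun _ => head_eq) (fun _ => head_eq) h).2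

end CanonicalWords

theorem prefixWord_succ (n : ℕ) : prefixWord n (· + 1) = [] := by
  simp [prefixWord, desc]

def chainLTEquivPowerset {α : Type*} [LinearOrder α] (s : Finset α) :
    {l : List α // l.IsChain (· < ·) ∧ ∀ a ∈ l, a ∈ s} ≃ s.powerset where
  toFun l := ⟨l.1.toFinset, Finset.mem_powerset.2 fun a ha => l.2.2 a (List.mem_toFinset.1 ha)⟩
  invFun t := ⟨t.1.sort (· ≤ ·), List.isChain_iff_pairwise.2
      (List.sortedLT_iff_pairwise.1 (Finset.sortedLT_sort t.1)),
    fun a ha => Finset.mem_powerset.1 t.2 ((Finset.mem_sort _).1 ha)⟩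
  left_inv l := by
    have hl := List.isChain_iff_pairwise.1 l.2.1
    exact Subtype.ext ((List.toFinset_sort _ (hl.imp ne_of_lt)).2 (hl.imp le_of_lt))
  right_inv t := Subtype.ext (Finset.sort_toFinset t.1 _)

theorem card_validSuffixIdx (n : ℕ) :
    Nat.card {js : List ℕ // ValidSuffixIdx n js} = 2 ^ (n - 1) := by
  have e : {js : List ℕ // ValidSuffixIdx n js} ≃
      {l : List ℕ // l.IsChain (· < ·) ∧ ∀ a ∈ l, a ∈ Finset.Icc 1 (n - 1)} :=
    Equiv.subtypeEquivRight fun js => by simp only [ValidSuffixIdx, Finset.mem_Icc]; rfl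
  rw [Nat.card_congr (e.trans (chainLTEquivPowerset _)), Nat.card_eq_fintype_card,
    Fintype.card_coe, Finset.card_powerset, Nat.card_Icc, Nat.add_sub_cancel]

/-- Sending a canonical reduced word `w₀·w'` to its suffix `w'` partitions the set of
fully commutative elements of type `Dₙ` into `2^(n-1)` collections indexed by subsets of
`{1, …, n-1}` (each element lies in the collection of exactly one suffix, and there are
`2^(n-1)` suffixes), and every collection is nonempty since every suffix is itself fully
commutative. -/
theorem suffix_partition (n : ℕ) (hn : 4 ≤ n) :
    (∀ w ∈ HomCanonical n, ∃! js : List ℕ,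
        ValidSuffixIdx n js ∧ w ∈ collection n (suffixWord n true js)) ∧
    Nat.card {js : List ℕ // ValidSuffixIdx n js} = 2 ^ (n - 1) ∧
    (∀ js : List ℕ, ValidSuffixIdx n js →
        (collection n (suffixWord n true js)).Nonempty) := by
  refine ⟨?_, card_validSuffixIdx n, ?_⟩
  · rintro w ⟨i, js, hi, hjs, rfl, hw⟩
    refine ⟨js, ⟨hjs, i, hi, rfl, hw⟩, ?_⟩
    rintro js' ⟨hjs', i', -, hw', -⟩
    exact suffixIdx_eq_of_prefixWord_append_eq (by omega) (fun j h => (hjs'.2 j h).2)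
      (fun j h => (hjs.2 j h).2) hw'.symm
  · intro js hjs
    refine ⟨suffixWord n true js, (· + 1), fun k _ _ => by simp, by rw [prefixWord_succ]; rfl, ?_⟩
    exact homog_suffixWord (by omega) true (fun j h => (hjs.2 j h).2)
      (List.isChain_iff_pairwise.1 hjs.1)
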